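/- If 0 ≤ ρ(α), ρ(β) ≤ C and 0 ≤ ρ'(α), ρ'(β) ≤ C with ‖α‖, ‖β‖ ≤ R, then the mixer kernel satisfies the Lipschitz estimate |M[ρ](α,β) - M[ρ'](α,β)| ≤ (1 + 2RC)·max(|ρ(α)-ρ'(α)|, |ρ(β)-ρ'(β)|) (any constant of the form c(R,C) depending only on R and C is acceptable). -/

import Mathlib

noncomputable def r (d : ℝ) : ℝ := -d / (1 + |d|)

noncomputable def dd (ρ : EuclideanSpace ℝ (Fin 2) → ℝ) (α β : EuclideanSpace ℝ (Fin 2)) : ℝ :=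
  ‖β‖ * ρ β - ‖α‖ * ρ α

noncomputable def M (ρ : EuclideanSpace ℝ (Fin 2) → ℝ) (α β : EuclideanSpace ℝ (Fin 2)) : ℝ :=
  if dd ρ α β ≥ 0 then r (dd ρ α β) * ρ α else r (dd ρ α β) * ρ β

/-! The branch of `M[ρ]` is selected by the sign of `d`. If `d[ρ]` and `d[ρ']` have the same sign,
both kernels multiply the same value of `ρ`, resp. `ρ'`, and since `r d = -d / (1 + |d|)` is
bounded by `1` and `1`-Lipschitz the difference is at most `|ρ - ρ'| + |d - d'| · C`. If the signs
differ, then `|d| + |d'| = |d - d'|`, and the crude bound `|r d| ≤ |d|` already gives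
`|d - d'| · C` (this also makes `r` `1`-Lipschitz across `0`). Finally
`|d[ρ] - d[ρ']| ≤ 2R · max |ρ - ρ'|`. -/

lemma r_neg (x : ℝ) : r (-x) = -r x := by
  simp only [r, abs_neg, neg_div]

lemma abs_r_le_one (x : ℝ) : |r x| ≤ 1 := by
  have h : (0 : ℝ) < 1 + |x| := by positivity
  rw [r, abs_div, abs_neg, abs_of_pos h, div_le_one h]
  linarith

lemma abs_r_le_abs (x : ℝ) : |r x| ≤ |x| := by
  have h : (0 : ℝ) < 1 + |x| := by positivity
  rw [r, abs_div, abs_neg, abs_of_pos h, div_le_iff₀ h]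
  nlinarith [abs_nonneg x]

lemma abs_r_mul_sub_r_mul_le_of_nonneg_of_nonpos {x y a b C : ℝ} (hx : 0 ≤ x) (hy : y ≤ 0)
    (ha : 0 ≤ a) (haC : a ≤ C) (hb : 0 ≤ b) (hbC : b ≤ C) :
    |r x * a - r y * b| ≤ |x - y| * C := by
  have hsplit : |x - y| = |x| + |y| := by
    rw [abs_of_nonneg hx, abs_of_nonpos hy, abs_of_nonneg (by linarith)]
    ring
  calc |r x * a - r y * b|
      ≤ |r x| * a + |r y| * b := by
        simpa only [abs_mul, abs_of_nonneg ha, abs_of_nonneg hb] using abs_sub (r x * a) (r y * b)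
    _ ≤ |x| * C + |y| * C :=
        add_le_add (mul_le_mul (abs_r_le_abs x) haC ha (abs_nonneg x))
          (mul_le_mul (abs_r_le_abs y) hbC hb (abs_nonneg y))
    _ = |x - y| * C := by rw [hsplit, add_mul]

lemma abs_r_sub_r_le_of_nonneg {x y : ℝ} (hx : 0 ≤ x) (hy : 0 ≤ y) :
    |r x - r y| ≤ |x - y| := by
  have hx' : (0 : ℝ) < 1 + x := by linarith
  have hy' : (0 : ℝ) < 1 + y := by linarith
  have hdiff : r x - r y = (y - x) / ((1 + x) * (1 + y)) := by
    rw [r, r, abs_of_nonneg hx, abs_of_nonneg hy]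
    field_simp
    ring
  have hden : 1 ≤ (1 + x) * (1 + y) := by nlinarith
  rw [hdiff, abs_div, abs_of_pos (mul_pos hx' hy'), abs_sub_comm, div_le_iff₀ (mul_pos hx' hy')]
  exact le_mul_of_one_le_right (abs_nonneg _) hden

lemma abs_r_sub_r_le (x y : ℝ) : |r x - r y| ≤ |x - y| := by
  rcases le_total 0 x with hx | hx <;> rcases le_total 0 y with hy | hy
  · exact abs_r_sub_r_le_of_nonneg hx hy
  · simpa using abs_r_mul_sub_r_mul_le_of_nonneg_of_nonpos hx hy zero_le_one le_rfl zero_le_one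
      le_rfl
  · rw [abs_sub_comm, abs_sub_comm x]
    simpa using abs_r_mul_sub_r_mul_le_of_nonneg_of_nonpos hy hx zero_le_one le_rfl zero_le_one
      le_rfl
  · have h := abs_r_sub_r_le_of_nonneg (neg_nonneg.2 hx) (neg_nonneg.2 hy)
    rwa [r_neg, r_neg, neg_sub_neg, neg_sub_neg, abs_sub_comm, abs_sub_comm y] at h

lemma abs_r_mul_sub_r_mul_le {x y a b m C : ℝ} (hb : 0 ≤ b) (hbC : b ≤ C) (hab : |a - b| ≤ m) :
    |r x * a - r y * b| ≤ m + |x - y| * C :=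
  calc |r x * a - r y * b|
      = |r x * (a - b) + (r x - r y) * b| := by ring_nf
    _ ≤ |r x| * |a - b| + |r x - r y| * b := by
        simpa only [abs_mul, abs_of_nonneg hb] using abs_add_le (r x * (a - b)) ((r x - r y) * b)
    _ ≤ 1 * m + |x - y| * C :=
        add_le_add (mul_le_mul (abs_r_le_one x) hab (abs_nonneg _) zero_le_one)
          (mul_le_mul (abs_r_sub_r_le x y) hbC hb (abs_nonneg _))
    _ = m + |x - y| * C := by rw [one_mul]

lemma abs_M_sub_M_le (ρ ρ' : EuclideanSpace ℝ (Fin 2) → ℝ) (α β : EuclideanSpace ℝ (Fin 2))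
    {C : ℝ} (hρ : 0 ≤ ρ α ∧ ρ α ≤ C ∧ 0 ≤ ρ β ∧ ρ β ≤ C)
    (hρ' : 0 ≤ ρ' α ∧ ρ' α ≤ C ∧ 0 ≤ ρ' β ∧ ρ' β ≤ C) :
    |M ρ α β - M ρ' α β| ≤
      max |ρ α - ρ' α| |ρ β - ρ' β| + |dd ρ α β - dd ρ' α β| * C := by
  obtain ⟨hα0, hαC, hβ0, hβC⟩ := hρ
  obtain ⟨hα0', hαC', hβ0', hβC'⟩ := hρ'
  have hm : 0 ≤ max |ρ α - ρ' α| |ρ β - ρ' β| := (abs_nonneg _).trans (le_max_left _ _)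
  unfold M
  split_ifs with hd hd' hd'
  · exact abs_r_mul_sub_r_mul_le hα0' hαC' (le_max_left _ _)
  · have h := abs_r_mul_sub_r_mul_le_of_nonneg_of_nonpos hd (not_le.1 hd').le hα0 hαC hβ0' hβC'
    linarith
  · have h := abs_r_mul_sub_r_mul_le_of_nonneg_of_nonpos hd' (not_le.1 hd).le hα0' hαC' hβ0 hβC
    rw [abs_sub_comm, abs_sub_comm (dd ρ α β)]
    linarith
  · exact abs_r_mul_sub_r_mul_le hβ0' hβC' (le_max_right _ _)

lemma abs_dd_sub_dd_le (ρ ρ' : EuclideanSpace ℝ (Fin 2) → ℝ) {α β : EuclideanSpace ℝ (Fin 2)}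
    {R : ℝ} (hα : ‖α‖ ≤ R) (hβ : ‖β‖ ≤ R) :
    |dd ρ α β - dd ρ' α β| ≤ 2 * R * max |ρ α - ρ' α| |ρ β - ρ' β| := by
  have hR : 0 ≤ R := (norm_nonneg α).trans hα
  calc |dd ρ α β - dd ρ' α β|
      = |‖β‖ * (ρ β - ρ' β) - ‖α‖ * (ρ α - ρ' α)| := by rw [dd, dd]; ring_nf
    _ ≤ ‖β‖ * |ρ β - ρ' β| + ‖α‖ * |ρ α - ρ' α| := by
        simpa only [abs_mul, abs_norm] using
          abs_sub (‖β‖ * (ρ β - ρ' β)) (‖α‖ * (ρ α - ρ' α))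
    _ ≤ R * max |ρ α - ρ' α| |ρ β - ρ' β| + R * max |ρ α - ρ' α| |ρ β - ρ' β| := by
        gcongr
        · exact le_max_right _ _
        · exact le_max_left _ _
    _ = 2 * R * max |ρ α - ρ' α| |ρ β - ρ' β| := by ring

theorem mixer_lipschitz_in_rho (ρ ρ' : EuclideanSpace ℝ (Fin 2) → ℝ)
    (α β : EuclideanSpace ℝ (Fin 2)) (C R : ℝ)
    (hρ : 0 ≤ ρ α ∧ ρ α ≤ C ∧ 0 ≤ ρ β ∧ ρ β ≤ C)
    (hρ' : 0 ≤ ρ' α ∧ ρ' α ≤ C ∧ 0 ≤ ρ' β ∧ ρ' β ≤ C)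
    (hα : ‖α‖ ≤ R) (hβ : ‖β‖ ≤ R) :
    |M ρ α β - M ρ' α β| ≤ (1 + 2 * R * C) * max |ρ α - ρ' α| |ρ β - ρ' β| := by
  have hC : 0 ≤ C := hρ.1.trans hρ.2.1
  calc |M ρ α β - M ρ' α β|
      ≤ max |ρ α - ρ' α| |ρ β - ρ' β| + |dd ρ α β - dd ρ' α β| * C :=
        abs_M_sub_M_le ρ ρ' α β hρ hρ'
    _ ≤ max |ρ α - ρ' α| |ρ β - ρ' β| + 2 * R * max |ρ α - ρ' α| |ρ β - ρ' β| * C := by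
        gcongr
        exact abs_dd_sub_dd_le ρ ρ' hα hβ
    _ = (1 + 2 * R * C) * max |ρ α - ρ' α| |ρ β - ρ' β| := by ring
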